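/- Fix n, d, s ∈ ℕ with n ≥ 1, s even, 2 ≤ s ≤ d, and 8n + 4 ≤ s, and fix ε > 0 and σ > 0. Let M_tree(d,s) be the family of sets S ⊆ Fin d with |S| = s such that for every i ∈ S with i > 0, the parent ⌊(i−1)/2⌋ also lies in S. Let F be the set of vectors β : Fin d → ℝ such that there exist S ∈ M_tree(d,s) and disjoint sets A, B partitioning S with |A| = |B| = s/2, β_i = −ε for i ∈ A, β_i = √(2/s) + ε for i ∈ B, and β_i = 0 for i ∉ S. Then for every measurable estimator β̂ : ℝ^{n×d} × ℝ^n → ℝ^d, under the joint law in which β* is uniform on F, X ∈ ℝ^{n×d} has i.i.d. entries gaussianReal 0 (1/n), e ∈ ℝ^n has i.i.d. entries gaussianReal 0 σ², and β*, X, e are mutually independent, the probability that β̂(X, sign(X·β* + e)) ≠ β* is at least 1/2. -/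

import Mathlib

/-!
For fixed `(X, e)` the estimator only sees one of `2 ^ n` sign patterns, so it can be right on at
most `2 ^ n` points of `F3tree d s ε`. That set contains all `C(s, s/2) ≥ 2 ^ (s/2) ≥ 2 ^ (n + 1)`
half-splits of the support `{0, …, s - 1}`, so the conditional success probability given `(X, e)`
is at most `1/2`, and Fubini finishes.
-/

open MeasureTheory ProbabilityTheory Real
open scoped ENNReal NNReal

/-- The sign function, with `sign x = 1` for `x ≥ 0` and `-1` otherwise. -/
noncomputable def signFun (x : ℝ) : ℝ := if 0 ≤ x then 1 else -1

/-- The binary-tree-structured sparsity model: supports of size `s` that are closed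
under the parent map `i ↦ ⌊(i-1)/2⌋` of the complete binary tree rooted at `0`. -/
def Mtree (d s : ℕ) : Set (Finset (Fin d)) :=
  {S | S.card = s ∧ ∀ i ∈ S, 0 < (i : ℕ) →
    (⟨((i : ℕ) - 1) / 2, by have := i.isLt; omega⟩ : Fin d) ∈ S}

/-- The one-bit restricted ensemble over the binary-tree sparsity model. -/
noncomputable def F3tree (d s : ℕ) (ε : ℝ) : Set (Fin d → ℝ) :=
  {β | ∃ S ∈ Mtree d s, ∃ A B : Finset (Fin d), Disjoint A B ∧ A ∪ B = S ∧
    A.card = s / 2 ∧ B.card = s / 2 ∧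
    (∀ i ∈ A, β i = -ε) ∧ (∀ i ∈ B, β i = Real.sqrt (2 / s) + ε) ∧
    ∀ i ∉ S, β i = 0}

theorem Nat.two_pow_le_centralBinom (k : ℕ) : 2 ^ k ≤ k.centralBinom := by
  induction k with
  | zero => simp
  | succ k ih =>
    have h := Nat.succ_mul_centralBinom_succ k
    rw [pow_succ]
    nlinarith

theorem Nat.two_pow_half_le_choose_half (s : ℕ) : 2 ^ (s / 2) ≤ s.choose (s / 2) :=
  calc 2 ^ (s / 2) ≤ (s / 2).centralBinom := Nat.two_pow_le_centralBinom _
    _ = (2 * (s / 2)).choose (s / 2) := Nat.centralBinom_eq_two_mul_choose _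
    _ ≤ s.choose (s / 2) := Nat.choose_le_choose _ (Nat.mul_div_le s 2)

theorem ProbabilityTheory.uniformOn_apply_of_finite {Ω : Type*} [MeasurableSpace Ω]
    [MeasurableSingletonClass Ω] {s : Set Ω} (hs : s.Finite) (t : Set Ω) :
    uniformOn s t = (s ∩ t).ncard / s.ncard := by
  rw [uniformOn, cond_apply hs.measurableSet, Measure.count_apply_finite _ hs,
    Measure.count_apply_finite _ (hs.inter_of_left t), ← Set.ncard_eq_toFinset_card _ hs,
    ← Set.ncard_eq_toFinset_card _ (hs.inter_of_left t), ENNReal.div_eq_inv_mul]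

open Function in
theorem Set.ncard_inter_fixedPoints_comp_le {α Y : Type*} [Finite Y] (F : Set α) (f : α → Y)
    (g : Y → α) : (F ∩ fixedPoints (g ∘ f)).ncard ≤ Nat.card Y := by
  have hinj : Set.InjOn f (F ∩ fixedPoints (g ∘ f)) := fun a ha b hb hab => by
    rw [← ha.2.eq, ← hb.2.eq, comp_apply, comp_apply, hab]
  simpa using Set.ncard_le_ncard_of_injOn f (fun _ _ => Set.mem_univ _) hinj

section Decoding

variable {α Ω Y : Type*} [MeasurableSpace α] [MeasurableSingletonClass α] [MeasurableSpace Ω]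
  [Finite Y] {F : Set α} (ν : Measure Ω) [IsProbabilityMeasure ν] (obs : α → Ω → Y)
  (dec : Ω → Y → α)

theorem prod_uniformOn_decode_eq_le (hF : F.Finite)
    (hE : MeasurableSet {p : α × Ω | dec p.2 (obs p.1 p.2) = p.1}) :
    (uniformOn F).prod ν {p | dec p.2 (obs p.1 p.2) = p.1} ≤ Nat.card Y / F.ncard := by
  have hslice (x : Ω) :
      uniformOn F (Function.fixedPoints (dec x ∘ (obs · x))) ≤ Nat.card Y / F.ncard := by
    rw [uniformOn_apply_of_finite hF]
    gcongr
    exact_mod_cast Set.ncard_inter_fixedPoints_comp_le F (obs · x) (dec x)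
  rw [Measure.prod_apply_symm hE]
  calc _ ≤ ∫⁻ _, (Nat.card Y / F.ncard : ℝ≥0∞) ∂ν := lintegral_mono hslice
    _ = _ := by simp

theorem half_le_prod_uniformOn_decode_ne [Nonempty Y] (hF : F.Finite)
    (hcard : 2 * Nat.card Y ≤ F.ncard)
    (hE : MeasurableSet {p : α × Ω | dec p.2 (obs p.1 p.2) = p.1}) :
    1 / 2 ≤ (uniformOn F).prod ν {p | dec p.2 (obs p.1 p.2) = p.1}ᶜ := by
  have hY : Nat.card Y ≠ 0 := Nat.card_ne_zero.2 ⟨inferInstance, inferInstance⟩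
  have := isProbabilityMeasure_uniformOn hF (Set.nonempty_of_ncard_ne_zero (by omega))
  have hhalf : (Nat.card Y / F.ncard : ℝ≥0∞) ≤ 1 / 2 := by
    calc (Nat.card Y / F.ncard : ℝ≥0∞) ≤ Nat.card Y / (2 * Nat.card Y) :=
          ENNReal.div_le_div_left (by exact_mod_cast hcard) _
      _ = 1 * Nat.card Y / (2 * Nat.card Y) := by rw [one_mul]
      _ = 1 / 2 := ENNReal.mul_div_mul_right _ _ (by simpa) (by simp)
  rw [prob_compl_eq_one_sub hE]
  calc (1 / 2 : ℝ≥0∞) = 1 - 1 / 2 := (ENNReal.sub_half ENNReal.one_ne_top).symm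
    _ ≤ _ := tsub_le_tsub_left ((prod_uniformOn_decode_eq_le ν obs dec hF hE).trans hhalf) 1

end Decoding

theorem attachFin_range_mem_Mtree {d s : ℕ} (hsd : s ≤ d) :
    (Finset.range s).attachFin (fun _ hm => (Finset.mem_range.1 hm).trans_le hsd) ∈ Mtree d s := by
  refine ⟨by simp, fun i hi _ => ?_⟩
  simp only [Finset.mem_attachFin, Finset.mem_range] at hi ⊢
  omega

noncomputable def treeEnsembleVector {d : ℕ} (s : ℕ) (ε : ℝ) (S A : Finset (Fin d)) :
    Fin d → ℝ :=
  fun i => if i ∈ A then -ε else if i ∈ S then √(2 / s) + ε else 0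

namespace F3tree

variable {d s : ℕ} {ε : ℝ}

theorem finite (d s : ℕ) (ε : ℝ) : (F3tree d s ε).Finite := by
  refine (Set.Finite.pi (t := fun _ : Fin d => {-ε, √(2 / s) + ε, 0})
    fun _ => Set.toFinite _).subset ?_
  rintro β ⟨S, -, A, B, -, rfl, -, -, hA, hB, h0⟩ i -
  by_cases hiA : i ∈ A
  · exact .inl (hA i hiA)
  by_cases hiB : i ∈ B
  · exact .inr (.inl (hB i hiB))
  · exact .inr (.inr (h0 i (by simp [hiA, hiB])))

theorem treeEnsembleVector_mem {S A : Finset (Fin d)} (heven : Even s) (hS : S ∈ Mtree d s)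
    (hA : A ∈ S.powersetCard (s / 2)) : treeEnsembleVector s ε S A ∈ F3tree d s ε := by
  obtain ⟨hAS, hAcard⟩ := Finset.mem_powersetCard.1 hA
  refine ⟨S, hS, A, S \ A, Finset.disjoint_sdiff, Finset.union_sdiff_of_subset hAS, hAcard,
    ?_, fun i hi => if_pos hi, fun i hi => ?_, fun i hi => ?_⟩
  · rw [Finset.card_sdiff_of_subset hAS, hS.1, hAcard]
    obtain ⟨k, rfl⟩ := heven
    omega
  · obtain ⟨hiS, hiA⟩ := Finset.mem_sdiff.1 hi
    simp [treeEnsembleVector, hiS, hiA]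
  · have hiA : i ∉ A := fun h => hi (hAS h)
    simp [treeEnsembleVector, hi, hiA]

theorem treeEnsembleVector_injective (hε : 0 < ε) (S : Finset (Fin d)) :
    Function.Injective (treeEnsembleVector s ε S) := by
  have hneg (A : Finset (Fin d)) (i : Fin d) : treeEnsembleVector s ε S A i = -ε ↔ i ∈ A := by
    have := Real.sqrt_nonneg (2 / s)
    unfold treeEnsembleVector
    split_ifs <;> simp_all <;> linarith
  intro A B hAB
  ext i
  rw [← hneg, ← hneg, hAB]

theorem choose_half_le_ncard (hsd : s ≤ d) (heven : Even s) (hε : 0 < ε) :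
    s.choose (s / 2) ≤ (F3tree d s ε).ncard := by
  have hS := attachFin_range_mem_Mtree hsd
  set S := (Finset.range s).attachFin _
  calc s.choose (s / 2) = (↑(S.powersetCard (s / 2)) : Set (Finset (Fin d))).ncard := by
        rw [Set.ncard_coe_finset, Finset.card_powersetCard, hS.1]
    _ ≤ (F3tree d s ε).ncard :=
        Set.ncard_le_ncard_of_injOn _ (fun _ hA => treeEnsembleVector_mem heven hS hA)
          (treeEnsembleVector_injective hε S).injOn (finite d s ε)

end F3tree

@[fun_prop]
theorem measurable_signFun : Measurable signFun :=
  Measurable.ite (measurableSet_le measurable_const measurable_id) measurable_const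
    measurable_const

theorem onebit_cs_tree_sparsity_lower_bound_general
    (n d s : ℕ) (heven : Even s) (hsd : s ≤ d)
    (hns : 8 * n + 4 ≤ s)
    (ε σ : ℝ) (hε : 0 < ε)
    (est : (Fin n → Fin d → ℝ) × (Fin n → ℝ) → (Fin d → ℝ))
    (hest : Measurable est) :
    (1 / 2 : ℝ≥0∞) ≤
      ((uniformOn (F3tree d s ε)).prod
          ((Measure.pi fun _ : Fin n => Measure.pi fun _ : Fin d =>
              gaussianReal 0 (1 / (n : ℝ≥0))).prod
            (Measure.pi fun _ : Fin n => gaussianReal 0 ⟨σ ^ 2, sq_nonneg σ⟩)))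
        {ω : (Fin d → ℝ) × ((Fin n → Fin d → ℝ) × (Fin n → ℝ)) |
          est (ω.2.1, fun i => signFun ((∑ j, ω.2.1 i j * ω.1 j) + ω.2.2 i)) ≠ ω.1} := by
  have hcard : 2 * Nat.card (Fin n → Bool) ≤ (F3tree d s ε).ncard :=
    calc 2 * Nat.card (Fin n → Bool) = 2 ^ (n + 1) := by simp [pow_succ, mul_comm]
      _ ≤ 2 ^ (s / 2) := Nat.pow_le_pow_right two_pos (by omega)
      _ ≤ s.choose (s / 2) := Nat.two_pow_half_le_choose_half s
      _ ≤ (F3tree d s ε).ncard := F3tree.choose_half_le_ncard hsd heven hε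
  -- `signFun` factors through these `2 ^ n` bit patterns
  let obs (β : Fin d → ℝ) (x : (Fin n → Fin d → ℝ) × (Fin n → ℝ)) (i : Fin n) : Bool :=
    decide (0 ≤ (∑ j, x.1 i j * β j) + x.2 i)
  let dec (x : (Fin n → Fin d → ℝ) × (Fin n → ℝ)) (b : Fin n → Bool) : Fin d → ℝ :=
    est (x.1, fun i => if b i then 1 else -1)
  let correct : Set ((Fin d → ℝ) × ((Fin n → Fin d → ℝ) × (Fin n → ℝ))) :=
    {p | dec p.2 (obs p.1 p.2) = p.1}
  have herr : {ω : (Fin d → ℝ) × ((Fin n → Fin d → ℝ) × (Fin n → ℝ)) |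
      est (ω.2.1, fun i => signFun ((∑ j, ω.2.1 i j * ω.1 j) + ω.2.2 i)) ≠ ω.1} = correctᶜ := by
    ext
    simp [correct, obs, dec, signFun]
  have hE : MeasurableSet correct := by
    rw [← MeasurableSet.compl_iff, ← herr]
    exact (measurableSet_eq_fun (by fun_prop) measurable_fst).compl
  -- instance search does not see through the anonymous constructor `⟨σ ^ 2, _⟩ : ℝ≥0`
  have (_ : Fin n) : IsProbabilityMeasure (gaussianReal 0 ⟨σ ^ 2, sq_nonneg σ⟩) :=
    instIsProbabilityMeasureGaussianReal _ _
  rw [herr]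
  exact half_le_prod_uniformOn_decode_ne _ obs dec (F3tree.finite d s ε) hcard hE

theorem onebit_cs_tree_sparsity_lower_bound
    (n d s : ℕ) (hn : 1 ≤ n) (heven : Even s) (hs2 : 2 ≤ s) (hsd : s ≤ d)
    (hns : 8 * n + 4 ≤ s)
    (ε σ : ℝ) (hε : 0 < ε) (hσ : 0 < σ)
    (est : (Fin n → Fin d → ℝ) × (Fin n → ℝ) → (Fin d → ℝ))
    (hest : Measurable est) :
    (1 / 2 : ℝ≥0∞) ≤
      ((uniformOn (F3tree d s ε)).prod
          ((Measure.pi fun _ : Fin n => Measure.pi fun _ : Fin d =>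
              gaussianReal 0 (1 / (n : ℝ≥0))).prod
            (Measure.pi fun _ : Fin n => gaussianReal 0 ⟨σ ^ 2, sq_nonneg σ⟩)))
        {ω : (Fin d → ℝ) × ((Fin n → Fin d → ℝ) × (Fin n → ℝ)) |
          est (ω.2.1, fun i => signFun ((∑ j, ω.2.1 i j * ω.1 j) + ω.2.2 i)) ≠ ω.1} :=
  onebit_cs_tree_sparsity_lower_bound_general n d s heven hsd hns ε σ hε est hest
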